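/- arXiv:2407.19959 — 2 statements merged into one kernel-verified Lean document; each statement's English description precedes it below -/
import Mathlib

section
/- Let S be a p×p real symmetric positive semidefinite matrix with eigenvalues λ₁ ≥ λ₂ ≥ … ≥ λ_p ≥ 0 and a corresponding orthonormal family of eigenvectors γ₁, …, γ_p, and let 1 ≤ r ≤ p. Then for every real p×r matrix B, ‖S − B·Bᵀ‖_F² ≥ Σ_{j=r+1}^p λ_j², and equality is attained at B* = [√λ₁·γ₁, …, √λ_r·γ_r], the matrix whose columns are √λ_j·γ_j for j = 1, …, r. In particular min_{B ∈ ℝ^{p×r}} ‖S − B·Bᵀ‖_F² = Σ_{j=r+1}^p λ_j². -/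
open Matrix Finset

lemma frob_eq_trace {n m : Type*} [Fintype n] [Fintype m] (X : Matrix n m ℝ) :
    ∑ i, ∑ j, (X i j)^2 = (Xᵀ * X).trace := by
  rw [Matrix.trace, Finset.sum_comm]
  simp [Matrix.diag, Matrix.mul_apply, sq]

lemma trace_tr_mul_self_nonneg {n m : Type*} [Fintype n] [Fintype m] (X : Matrix n m ℝ) :
    0 ≤ (Xᵀ * X).trace := by
  rw [← frob_eq_trace]; positivity

lemma trace_proj_le {n : Type*} [Fintype n] [DecidableEq n] (X Q : Matrix n n ℝ)
    (hQs : Qᵀ = Q) (hQi : Q * Q = Q) : (Xᵀ * X * Q).trace ≤ (Xᵀ * X).trace := by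
  have h2 : (1 - Q) * (1 - Q) = 1 - Q := by
    have : (1 - Q) * (1 - Q) = 1 - Q - Q + Q * Q := by noncomm_ring
    rw [this, hQi]; abel
  have key : ((X * (1 - Q))ᵀ * (X * (1 - Q))).trace
      = (Xᵀ * X).trace - (Xᵀ * X * Q).trace := by
    calc ((X * (1 - Q))ᵀ * (X * (1 - Q))).trace
        = (((1 - Q) * (Xᵀ * X)) * (1 - Q)).trace := by
          rw [Matrix.transpose_mul, Matrix.transpose_sub, Matrix.transpose_one, hQs]
          congr 1; noncomm_ring
      _ = ((1 - Q) * ((1 - Q) * (Xᵀ * X))).trace := Matrix.trace_mul_comm _ _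
      _ = ((1 - Q) * (Xᵀ * X)).trace := by rw [← Matrix.mul_assoc, h2]
      _ = (Xᵀ * X).trace - (Xᵀ * X * Q).trace := by
          rw [Matrix.sub_mul, one_mul, Matrix.trace_sub,
            Matrix.trace_mul_comm Q (Xᵀ * X)]
  have := trace_tr_mul_self_nonneg (X * (1 - Q))
  linarith

lemma trace_diagonal_mul {n : Type*} [Fintype n] [DecidableEq n] (d : n → ℝ) (Q : Matrix n n ℝ) :
    (Matrix.diagonal d * Q).trace = ∑ j, d j * Q j j := by
  simp [Matrix.trace, Matrix.diag]

lemma map_castLEEmb_eq_filter {p r : ℕ} (hrp : r ≤ p) :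
    (univ.map (Fin.castLEEmb hrp)) = univ.filter (fun j : Fin p => (j:ℕ) < r) := by
  ext j
  simp only [Finset.mem_map, Finset.mem_univ, true_and, Finset.mem_filter]
  constructor
  · rintro ⟨a, rfl⟩; simpa using a.isLt
  · intro h; exact ⟨⟨(j:ℕ), h⟩, by simp [Fin.castLEEmb, Fin.ext_iff]⟩

lemma card_filter_le {p r : ℕ} (hrp : r ≤ p) :
    (univ.filter (fun j : Fin p => r ≤ (j:ℕ))).card = p - r := by
  have h1 : (univ.filter (fun j : Fin p => (j:ℕ) < r)).card = r := by
    rw [← map_castLEEmb_eq_filter hrp, Finset.card_map]; simp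
  have h2 := Finset.card_filter_add_card_filter_not
    (s := (univ : Finset (Fin p))) (p := fun j : Fin p => (j:ℕ) < r)
  have h3 : (univ.filter (fun j : Fin p => ¬ (j:ℕ) < r))
      = (univ.filter (fun j : Fin p => r ≤ (j:ℕ))) := by
    apply Finset.filter_congr; intro j _; simp [not_lt]
  rw [h3, h1] at h2
  simp only [Finset.card_univ, Fintype.card_fin] at h2
  omega

lemma key_sum {p r : ℕ} (hrp : r ≤ p) (μ q : Fin p → ℝ)
    (hdesc : ∀ i j : Fin p, i ≤ j → μ j ≤ μ i) (hpos : ∀ j, 0 ≤ μ j)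
    (hq0 : ∀ j, 0 ≤ q j) (hq1 : ∀ j, q j ≤ 1)
    (hqs : ∑ j, q j = ((p - r : ℕ) : ℝ)) :
    ∑ j ∈ univ.filter (fun j : Fin p => r ≤ (j:ℕ)), μ j ≤ ∑ j, μ j * q j := by
  by_cases hrp' : r < p
  · set A := univ.filter (fun j : Fin p => (j:ℕ) < r) with hA
    set Ac := univ.filter (fun j : Fin p => r ≤ (j:ℕ)) with hAc
    have hsplit : ∀ f : Fin p → ℝ, ∑ j ∈ A, f j + ∑ j ∈ Ac, f j = ∑ j, f j := by
      intro f
      have : Ac = univ.filter (fun j : Fin p => ¬ (j:ℕ) < r) := by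
        rw [hAc]; apply Finset.filter_congr; intro j _; simp [not_lt]
      rw [this, hA, Finset.sum_filter_add_sum_filter_not]
    set c := μ ⟨r, hrp'⟩ with hc
    have hcard : (Ac.card : ℝ) = ((p - r : ℕ) : ℝ) := by
      rw [hAc, card_filter_le hrp]
    have h1 : c * ∑ j ∈ A, q j ≤ ∑ j ∈ A, μ j * q j := by
      rw [Finset.mul_sum]
      apply Finset.sum_le_sum
      intro j hj
      have hjr : (j:ℕ) < r := by simpa [hA] using hj
      have : c ≤ μ j := hdesc j ⟨r, hrp'⟩ (by simpa [Fin.le_def] using hjr.le)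
      exact mul_le_mul_of_nonneg_right this (hq0 j)
    have h2 : ∑ j ∈ Ac, μ j * (1 - q j) ≤ c * ∑ j ∈ Ac, (1 - q j) := by
      rw [Finset.mul_sum]
      apply Finset.sum_le_sum
      intro j hj
      have hjr : r ≤ (j:ℕ) := by simpa [hAc] using hj
      have : μ j ≤ c := hdesc ⟨r, hrp'⟩ j (by simpa [Fin.le_def] using hjr)
      exact mul_le_mul_of_nonneg_right this (by linarith [hq1 j])
    have h3 : ∑ j ∈ Ac, (1 - q j) = ∑ j ∈ A, q j := by
      have hq := hsplit q
      rw [Finset.sum_sub_distrib, Finset.sum_const, nsmul_eq_mul, mul_one]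
      rw [← hqs] at *
      linarith [hcard]
    have h4 : ∑ j ∈ Ac, μ j * (1 - q j) = ∑ j ∈ Ac, μ j - ∑ j ∈ Ac, μ j * q j := by
      rw [← Finset.sum_sub_distrib]
      apply Finset.sum_congr rfl; intro j _; ring
    have h5 := hsplit (fun j => μ j * q j)
    rw [h3] at h2
    rw [h4] at h2
    linarith
  · have hrp2 : r = p := le_antisymm hrp (not_lt.mp hrp')
    have : (univ.filter (fun j : Fin p => r ≤ (j:ℕ))) = ∅ := by
      apply Finset.filter_false_of_mem
      intro j _
      have := j.isLt; omega
    rw [this]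
    simp only [Finset.sum_empty]
    exact Finset.sum_nonneg fun j _ => mul_nonneg (hpos j) (hq0 j)

lemma exists_kernel_V {p r : ℕ} (B : Matrix (Fin p) (Fin r) ℝ) :
    ∃ V : Matrix (Fin p) (Fin (p - r)) ℝ, Vᵀ * V = 1 ∧ Bᵀ * V = 0 := by
  let L : EuclideanSpace ℝ (Fin p) →ₗ[ℝ] (Fin r → ℝ) :=
    Bᵀ.mulVecLin ∘ₗ (WithLp.linearEquiv 2 ℝ (Fin p → ℝ)).toLinearMap
  have hker : p - r ≤ Module.finrank ℝ (LinearMap.ker L) := by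
    have h := LinearMap.finrank_range_add_finrank_ker L
    rw [finrank_euclideanSpace_fin] at h
    have h2 : Module.finrank ℝ (LinearMap.range L) ≤ r :=
      le_trans (Submodule.finrank_le _) (by simp)
    omega
  let b := stdOrthonormalBasis ℝ (LinearMap.ker L)
  let v : Fin (p - r) → EuclideanSpace ℝ (Fin p) := fun i => (b (Fin.castLE hker i) : _)
  have hvon : ∀ i j, ∑ k, v i k * v j k = if i = j then (1:ℝ) else 0 := by
    intro i j
    have hb := b.orthonormal
    rw [orthonormal_iff_ite] at hb
    have h1 := hb (Fin.castLE hker i) (Fin.castLE hker j)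
    rw [Submodule.coe_inner, PiLp.inner_apply] at h1
    simp only [RCLike.inner_apply, starRingEnd_apply, star_trivial] at h1
    simp only [Fin.castLE_inj] at h1
    exact (Finset.sum_congr rfl fun k _ => mul_comm _ _).trans h1
  have hvker : ∀ i, Bᵀ *ᵥ (v i) = 0 := by
    intro i
    have h := (b (Fin.castLE hker i)).2
    rw [LinearMap.mem_ker] at h
    exact h
  refine ⟨Matrix.of fun k i => v i k, ?_, ?_⟩
  · ext i j
    simpa [Matrix.mul_apply, Matrix.one_apply] using hvon i j
  · ext j i
    have := congrFun (hvker i) j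
    simpa [Matrix.mul_apply, Matrix.mulVec, dotProduct] using this

/-- The matrix `B* = [√λ₁·γ₁, …, √λ_r·γ_r]` whose `j`-th column is `√λ_j · γ_j`. -/
noncomputable def BstarMat (p r : ℕ) (hrp : r ≤ p) (lam : Fin p → ℝ)
    (γ : Fin p → Fin p → ℝ) : Matrix (Fin p) (Fin r) ℝ :=
  Matrix.of fun i (j : Fin r) =>
    Real.sqrt (lam (Fin.castLE hrp j)) * γ (Fin.castLE hrp j) i

/-- Let `S` be a `p×p` real symmetric positive semidefinite matrix with eigenvalues
`λ₁ ≥ … ≥ λ_p ≥ 0` and corresponding orthonormal eigenvectors `γ₁, …, γ_p`, and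
let `1 ≤ r ≤ p`.  Then for every `p×r` real matrix `B`,
`‖S − B·Bᵀ‖_F² ≥ Σ_{j=r+1}^p λ_j²`, with equality at `B* = [√λ₁·γ₁, …, √λ_r·γ_r]`. -/
theorem stmt_7 (p r : ℕ) (hr1 : 1 ≤ r) (hrp : r ≤ p)
    (S : Matrix (Fin p) (Fin p) ℝ) (hSymm : S.IsSymm)
    (lam : Fin p → ℝ) (γ : Fin p → Fin p → ℝ)
    (hdesc : ∀ i j : Fin p, i ≤ j → lam j ≤ lam i)
    (hnonneg : ∀ j, 0 ≤ lam j)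
    (heig : ∀ j, S.mulVec (γ j) = lam j • γ j)
    (horth : ∀ i j, γ i ⬝ᵥ γ j = if i = j then (1 : ℝ) else 0) :
    (∀ B : Matrix (Fin p) (Fin r) ℝ,
        ∑ j ∈ Finset.univ.filter (fun j : Fin p => r ≤ (j : ℕ)), (lam j) ^ 2 ≤
          ∑ i, ∑ j, ((S - B * B.transpose) i j) ^ 2) ∧
      ∑ i, ∑ j,
          ((S - BstarMat p r hrp lam γ * (BstarMat p r hrp lam γ).transpose) i j) ^ 2 =
        ∑ j ∈ Finset.univ.filter (fun j : Fin p => r ≤ (j : ℕ)), (lam j) ^ 2 := by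
  classical
  set G : Matrix (Fin p) (Fin p) ℝ := Matrix.of fun j i => γ j i with hG
  have hGGt : G * Gᵀ = 1 := by
    ext i j
    simpa [hG, Matrix.mul_apply, Matrix.one_apply, dotProduct] using horth i j
  have hGtG : Gᵀ * G = 1 := mul_eq_one_comm.mp hGGt
  have hS : S = Gᵀ * Matrix.diagonal lam * G := by
    have h1 : S * Gᵀ = Gᵀ * Matrix.diagonal lam := by
      ext i j
      have h := congrFun (heig j) i
      simp only [Matrix.mulVec, dotProduct, Pi.smul_apply, smul_eq_mul] at h
      rw [Matrix.mul_diagonal]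
      simp only [Matrix.mul_apply, Matrix.transpose_apply, hG, Matrix.of_apply]
      rw [h]; ring
    calc S = S * (Gᵀ * G) := by rw [hGtG, Matrix.mul_one]
      _ = (S * Gᵀ) * G := by rw [Matrix.mul_assoc]
      _ = Gᵀ * Matrix.diagonal lam * G := by rw [h1]
  constructor
  · -- lower bound
    intro B
    obtain ⟨V, hVtV, hBtV⟩ := exists_kernel_V B
    set X := S - B * Bᵀ with hX
    set C := G * V with hC
    have hCtC : Cᵀ * C = 1 := by
      rw [hC, Matrix.transpose_mul]
      calc Vᵀ * Gᵀ * (G * V) = Vᵀ * (Gᵀ * G) * V := by simp only [Matrix.mul_assoc]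
        _ = Vᵀ * V := by rw [hGtG, Matrix.mul_one]
        _ = 1 := hVtV
    set Q1 := V * Vᵀ with hQ1
    have hQ1s : Q1ᵀ = Q1 := by rw [hQ1, Matrix.transpose_mul, Matrix.transpose_transpose]
    have hQ1i : Q1 * Q1 = Q1 := by
      rw [hQ1]
      calc V * Vᵀ * (V * Vᵀ) = V * (Vᵀ * V) * Vᵀ := by simp only [Matrix.mul_assoc]
        _ = V * Vᵀ := by rw [hVtV, Matrix.mul_one]
    set Q2 := C * Cᵀ with hQ2
    have hQ2s : Q2ᵀ = Q2 := by rw [hQ2, Matrix.transpose_mul, Matrix.transpose_transpose]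
    have hQ2i : Q2 * Q2 = Q2 := by
      rw [hQ2]
      calc C * Cᵀ * (C * Cᵀ) = C * (Cᵀ * C) * Cᵀ := by simp only [Matrix.mul_assoc]
        _ = C * Cᵀ := by rw [hCtC, Matrix.mul_one]
    have hsym : ∀ a b, Q2 a b = Q2 b a := by
      intro a b
      have := congrFun (congrFun hQ2s a) b
      simpa [Matrix.transpose_apply] using this.symm
    have hdiagQ2 : ∀ j, Q2 j j = ∑ k, (Q2 j k)^2 := by
      intro j
      conv_lhs => rw [← hQ2i]
      rw [Matrix.mul_apply]
      apply Finset.sum_congr rfl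
      intro k _
      rw [hsym k j]; ring
    have hq0 : ∀ j, 0 ≤ Q2 j j := by
      intro j; rw [hdiagQ2 j]; positivity
    have hq1 : ∀ j, Q2 j j ≤ 1 := by
      intro j
      have h := hdiagQ2 j
      have hle : (Q2 j j)^2 ≤ ∑ k, (Q2 j k)^2 :=
        Finset.single_le_sum (f := fun k => (Q2 j k)^2) (fun k _ => sq_nonneg _)
          (Finset.mem_univ j)
      have h0 := hq0 j
      nlinarith
    have hqsum : ∑ j, Q2 j j = ((p - r : ℕ) : ℝ) := by
      have ht : Q2.trace = ((p - r : ℕ) : ℝ) := by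
        rw [hQ2, Matrix.trace_mul_comm, hCtC, Matrix.trace_one]
        simp
      simpa [Matrix.trace, Matrix.diag] using ht
    have step1 : (Xᵀ * X * Q1).trace ≤ (Xᵀ * X).trace := trace_proj_le X Q1 hQ1s hQ1i
    have hXV : X * V = Gᵀ * Matrix.diagonal lam * C := by
      rw [hX, Matrix.sub_mul, Matrix.mul_assoc B, hBtV, Matrix.mul_zero, sub_zero,
        hS, Matrix.mul_assoc (Gᵀ * Matrix.diagonal lam), hC]
    have step2 : (Xᵀ * X * Q1).trace = ((X * V)ᵀ * (X * V)).trace := by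
      have h1 : Xᵀ * X * Q1 = (Xᵀ * (X * V)) * Vᵀ := by
        rw [hQ1]; simp only [Matrix.mul_assoc]
      have h2 : (X * V)ᵀ * (X * V) = Vᵀ * (Xᵀ * (X * V)) := by
        rw [Matrix.transpose_mul]; simp only [Matrix.mul_assoc]
      rw [h1, h2, Matrix.trace_mul_comm]
    have step3 : (X * V)ᵀ * (X * V)
        = Cᵀ * (Matrix.diagonal lam * Matrix.diagonal lam) * C := by
      rw [hXV]
      calc (Gᵀ * Matrix.diagonal lam * C)ᵀ * (Gᵀ * Matrix.diagonal lam * C)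
          = Cᵀ * (Matrix.diagonal lam * ((G * Gᵀ) * (Matrix.diagonal lam * C))) := by
            simp only [Matrix.transpose_mul, Matrix.transpose_transpose,
              Matrix.diagonal_transpose, Matrix.mul_assoc]
        _ = Cᵀ * (Matrix.diagonal lam * (Matrix.diagonal lam * C)) := by
            rw [hGGt, Matrix.one_mul]
        _ = Cᵀ * (Matrix.diagonal lam * Matrix.diagonal lam) * C := by
            simp only [Matrix.mul_assoc]
    have step4 : ((X * V)ᵀ * (X * V)).trace = ∑ j, (lam j)^2 * Q2 j j := by
      rw [step3, Matrix.trace_mul_cycle, Matrix.trace_mul_comm, ← hQ2,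
        Matrix.diagonal_mul_diagonal, trace_diagonal_mul]
      apply Finset.sum_congr rfl
      intro j _
      ring
    have step5 : ∑ j ∈ univ.filter (fun j : Fin p => r ≤ (j:ℕ)), (lam j)^2
        ≤ ∑ j, (lam j)^2 * Q2 j j := by
      apply key_sum hrp
      · intro i j hij
        exact pow_le_pow_left₀ (hnonneg j) (hdesc i j hij) 2
      · intro j; positivity
      · exact hq0
      · exact hq1
      · exact hqsum
    rw [frob_eq_trace]
    calc ∑ j ∈ univ.filter (fun j : Fin p => r ≤ (j:ℕ)), (lam j)^2
        ≤ ∑ j, (lam j)^2 * Q2 j j := step5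
      _ = (Xᵀ * X * Q1).trace := by rw [step2, step4]
      _ ≤ (Xᵀ * X).trace := step1
  · -- equality at Bstar
    set lam' : Fin p → ℝ := fun j => if (j:ℕ) < r then lam j else 0 with hlam'
    set e : Fin p → ℝ := fun j => if r ≤ (j:ℕ) then lam j else 0 with he
    have hBstar : BstarMat p r hrp lam γ * (BstarMat p r hrp lam γ)ᵀ
        = Gᵀ * Matrix.diagonal lam' * G := by
      ext i l
      have h1 : (Gᵀ * Matrix.diagonal lam' * G) i l
          = ∑ j : Fin p, (if (j:ℕ) < r then γ j i * lam j * γ j l else 0) := by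
        rw [Matrix.mul_apply]
        apply Finset.sum_congr rfl
        intro j _
        rw [Matrix.mul_diagonal]
        simp only [Matrix.transpose_apply, hG, Matrix.of_apply, hlam']
        split <;> ring
      rw [h1, ← Finset.sum_filter, ← map_castLEEmb_eq_filter hrp, Finset.sum_map,
        Matrix.mul_apply]
      apply Finset.sum_congr rfl
      intro j _
      simp only [BstarMat, Matrix.of_apply, Matrix.transpose_apply, Fin.castLEEmb_apply]
      have hs : Real.sqrt (lam (Fin.castLE hrp j)) * Real.sqrt (lam (Fin.castLE hrp j))
          = lam (Fin.castLE hrp j) := Real.mul_self_sqrt (hnonneg _)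
      calc Real.sqrt (lam (Fin.castLE hrp j)) * γ (Fin.castLE hrp j) i
            * (Real.sqrt (lam (Fin.castLE hrp j)) * γ (Fin.castLE hrp j) l)
          = (Real.sqrt (lam (Fin.castLE hrp j)) * Real.sqrt (lam (Fin.castLE hrp j)))
            * (γ (Fin.castLE hrp j) i * γ (Fin.castLE hrp j) l) := by ring
        _ = γ (Fin.castLE hrp j) i * lam (Fin.castLE hrp j) * γ (Fin.castLE hrp j) l := by
            rw [hs]; ring
    have hdiff : S - BstarMat p r hrp lam γ * (BstarMat p r hrp lam γ)ᵀ
        = Gᵀ * Matrix.diagonal e * G := by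
      have hde : Matrix.diagonal lam - Matrix.diagonal lam' = Matrix.diagonal e := by
        ext a b
        by_cases hab : a = b
        · subst hab
          simp only [Matrix.sub_apply, Matrix.diagonal_apply_eq, hlam', he]
          by_cases h : (a:ℕ) < r
          · simp [h, not_le.mpr h]
          · simp [h, not_lt.mp h]
        · simp [Matrix.sub_apply, Matrix.diagonal_apply_ne _ hab]
      rw [hS, hBstar]
      calc Gᵀ * Matrix.diagonal lam * G - Gᵀ * Matrix.diagonal lam' * G
          = Gᵀ * (Matrix.diagonal lam - Matrix.diagonal lam') * G := by noncomm_ring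
        _ = Gᵀ * Matrix.diagonal e * G := by rw [hde]
    rw [hdiff, frob_eq_trace]
    have h1 : (Gᵀ * Matrix.diagonal e * G)ᵀ = Gᵀ * Matrix.diagonal e * G := by
      rw [Matrix.transpose_mul, Matrix.transpose_mul, Matrix.transpose_transpose,
        Matrix.diagonal_transpose]
      noncomm_ring
    rw [h1]
    have h2 : (Gᵀ * Matrix.diagonal e * G) * (Gᵀ * Matrix.diagonal e * G)
        = Gᵀ * (Matrix.diagonal e * Matrix.diagonal e) * G := by
      have : (Gᵀ * Matrix.diagonal e * G) * (Gᵀ * Matrix.diagonal e * G)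
          = Gᵀ * Matrix.diagonal e * (G * Gᵀ) * Matrix.diagonal e * G := by noncomm_ring
      rw [this, hGGt, Matrix.mul_one]
      noncomm_ring
    rw [h2, Matrix.trace_mul_cycle, hGGt, one_mul, Matrix.diagonal_mul_diagonal,
      Matrix.trace_diagonal]
    rw [Finset.sum_filter]
    apply Finset.sum_congr rfl
    intro j _
    simp only [he]
    split <;> ring
end

section
/- Let u > 1, let s̄ < u, and let P be a probability measure on ℝ supported in [0, s̄] with mean ∫ s dP(s) = 1. Then (u − 1)·∫ s/(u − s) dP(s) ≥ 1, and the inequality is strict unless P is the Dirac measure at 1. -/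
/-!
The function `φ(s) = (u - 1) s / (u - s)` satisfies `φ(1) = 1` and lies above its tangent line
at `s = 1`: the gap is `u (s - 1)² / ((u - 1)(u - s))`, positive for `s < u`, `s ≠ 1`.
Integrating the tangent line against a law of mean `1` gives `1`, so `∫ φ dP ≥ 1`, and equality
forces the gap to vanish `P`-a.e., i.e. `s = 1` a.e., i.e. `P = δ₁`.
-/

open MeasureTheory

theorem ContinuousOn.integrable_of_ae_mem {X E : Type*} [TopologicalSpace X] [T2Space X]
    [MeasurableSpace X] [OpensMeasurableSpace X] [NormedAddCommGroup E] {μ : Measure X}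
    [IsFiniteMeasureOnCompacts μ] {K : Set X} {g : X → E} (hK : IsCompact K)
    (hg : ContinuousOn g K) (hae : ∀ᵐ x ∂μ, x ∈ K) : Integrable g μ := by
  simpa only [IntegrableOn, Measure.restrict_eq_self_of_ae_mem hae] using
    hg.integrableOn_compact (μ := μ) hK

namespace MeasureTheory

variable {P : Measure ℝ} [IsProbabilityMeasure P] {f : ℝ → ℝ} {m a c : ℝ}

theorem Integrable.affine (hid : Integrable (fun s ↦ s) P) :
    Integrable (fun s ↦ a + c * (s - m)) P :=
  (integrable_const a).add ((hid.sub (integrable_const m)).const_mul c)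

theorem integral_affine_of_integral_id_eq (hid : Integrable (fun s ↦ s) P)
    (hm : ∫ s, s ∂P = m) : ∫ s, (a + c * (s - m)) ∂P = a := by
  have hcentered_int : Integrable (fun s ↦ s - m) P := hid.sub (integrable_const m)
  have hcentered : ∫ s, (s - m) ∂P = 0 := by
    rw [integral_sub hid (integrable_const m), hm]; simp
  rw [integral_add (integrable_const a) (hcentered_int.const_mul c), integral_const_mul,
    hcentered]
  simp

theorem le_integral_of_affine_le (hid : Integrable (fun s ↦ s) P) (hm : ∫ s, s ∂P = m)
    (hf : Integrable f P) (hle : ∀ᵐ s ∂P, a + c * (s - m) ≤ f s) :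
    a ≤ ∫ s, f s ∂P := by
  calc a = ∫ s, (a + c * (s - m)) ∂P := (integral_affine_of_integral_id_eq hid hm).symm
    _ ≤ ∫ s, f s ∂P := integral_mono_ae hid.affine hf hle

theorem eq_dirac_of_integral_eq_of_affine_le (hid : Integrable (fun s ↦ s) P)
    (hm : ∫ s, s ∂P = m) (hf : Integrable f P) (hle : ∀ᵐ s ∂P, a + c * (s - m) ≤ f s)
    (hlt : ∀ᵐ s ∂P, s ≠ m → a + c * (s - m) < f s) (heq : ∫ s, f s ∂P = a) :
    P = Measure.dirac m := by
  have haff : Integrable (fun s ↦ a + c * (s - m)) P := hid.affine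
  have hgap_int : ∫ s, (f s - (a + c * (s - m))) ∂P = 0 := by
    rw [integral_sub hf haff, heq, integral_affine_of_integral_id_eq hid hm, sub_self]
  have hgap_zero : (fun s ↦ f s - (a + c * (s - m))) =ᵐ[P] 0 :=
    (integral_eq_zero_iff_of_nonneg_ae (hle.mono fun s hs ↦ sub_nonneg.mpr hs)
      (hf.sub haff)).mp hgap_int
  have hconst : (fun s ↦ s) =ᵐ[P] fun _ ↦ m := by
    filter_upwards [hgap_zero, hlt] with s hs hs_lt
    by_contra hsm
    exact (sub_pos.mpr (hs_lt hsm)).ne' hs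
  simpa using (ProbabilityTheory.hasLaw_dirac_of_ae_eq hconst).map_eq

end MeasureTheory

theorem sub_one_mul_div_sub_eq_tangent_add {u s : ℝ} (hu : u ≠ 1) (hs : s ≠ u) :
    (u - 1) * (s / (u - s)) =
      1 + u / (u - 1) * (s - 1) + u * (s - 1) ^ 2 / ((u - 1) * (u - s)) := by
  have hu' : u - 1 ≠ 0 := sub_ne_zero.mpr hu
  have hs' : u - s ≠ 0 := sub_ne_zero.mpr hs.symm
  field_simp
  ring

theorem tangent_le_sub_one_mul_div_sub {u s : ℝ} (hu : 1 < u) (hs : s < u) :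
    1 + u / (u - 1) * (s - 1) ≤ (u - 1) * (s / (u - s)) := by
  have hgap := sub_one_mul_div_sub_eq_tangent_add hu.ne' hs.ne
  have : 0 ≤ u * (s - 1) ^ 2 / ((u - 1) * (u - s)) := by
    have := sub_pos.mpr hu; have := sub_pos.mpr hs; positivity
  linarith

theorem tangent_lt_sub_one_mul_div_sub {u s : ℝ} (hu : 1 < u) (hs : s < u) (hs1 : s ≠ 1) :
    1 + u / (u - 1) * (s - 1) < (u - 1) * (s / (u - s)) := by
  have hgap := sub_one_mul_div_sub_eq_tangent_add hu.ne' hs.ne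
  have : 0 < u * (s - 1) ^ 2 / ((u - 1) * (u - s)) := by
    have := sub_pos.mpr hu; have := sub_pos.mpr hs; have := sub_ne_zero.mpr hs1; positivity
  linarith

/-- Let `u > 1`, `s̄ < u`, and let `P` be a probability measure on `ℝ` supported in
`[0, s̄]` with mean `1`.  Then `(u − 1)·∫ s/(u − s) dP(s) ≥ 1`, with strict inequality
unless `P` is the Dirac measure at `1`. -/
theorem stmt_11 (u sbar : ℝ) (hu : 1 < u) (hsbar : sbar < u)
    (P : Measure ℝ) [IsProbabilityMeasure P]
    (hsupp : P (Set.Icc 0 sbar)ᶜ = 0)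
    (hmean : ∫ s, s ∂P = 1) :
    1 ≤ (u - 1) * ∫ s, s / (u - s) ∂P ∧
      (P ≠ Measure.dirac 1 → 1 < (u - 1) * ∫ s, s / (u - s) ∂P) := by
  have hae : ∀ᵐ s ∂P, s ∈ Set.Icc 0 sbar := mem_ae_iff.mpr hsupp
  have hid : Integrable (fun s ↦ s) P := integrable_of_integral_eq_one hmean
  have hcont : ContinuousOn (fun s ↦ s / (u - s)) (Set.Icc 0 sbar) :=
    continuousOn_id.div (continuousOn_const.sub continuousOn_id)
      fun s hs ↦ (sub_pos.mpr (hs.2.trans_lt hsbar)).ne'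
  have hf : Integrable (fun s ↦ s / (u - s)) P := hcont.integrable_of_ae_mem isCompact_Icc hae
  have hφ : Integrable (fun s ↦ (u - 1) * (s / (u - s))) P := hf.const_mul _
  have hle : ∀ᵐ s ∂P, 1 + u / (u - 1) * (s - 1) ≤ (u - 1) * (s / (u - s)) :=
    hae.mono fun s hs ↦ tangent_le_sub_one_mul_div_sub hu (hs.2.trans_lt hsbar)
  have hlt : ∀ᵐ s ∂P, s ≠ 1 → 1 + u / (u - 1) * (s - 1) < (u - 1) * (s / (u - s)) :=
    hae.mono fun s hs ↦ tangent_lt_sub_one_mul_div_sub hu (hs.2.trans_lt hsbar)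
  rw [← integral_const_mul]
  have hge := le_integral_of_affine_le hid hmean hφ hle
  refine ⟨hge, fun hne ↦ hge.lt_of_ne fun heq ↦ hne ?_⟩
  exact eq_dirac_of_integral_eq_of_affine_le hid hmean hφ hle hlt heq.symm
end
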